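/- The strong product C_5 ⊠ C_5 of the 5-cycle with itself has vertex cover number at least 20; that is, every set of vertices of C_5 ⊠ C_5 containing at least one endpoint of every edge has cardinality at least 20. -/

import Mathlib

open SimpleGraph

/-- `S` is a monitoring edge-geodetic set (MEG-set) of `G`: for every edge `e` of `G`
there are `x, y ∈ S` whose distance in `G − e` differs from their distance in `G`
(including the case that they become disconnected in `G − e`). -/
def IsMEGSet {V : Type*} (G : SimpleGraph V) (S : Set V) : Prop :=
  ∀ e ∈ G.edgeSet, ∃ x ∈ S, ∃ y ∈ S,
    ¬ (G.deleteEdges {e}).Reachable x y ∨ (G.deleteEdges {e}).dist x y ≠ G.dist x y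

/-- The monitoring edge-geodetic number: the minimum cardinality of an MEG-set. -/
noncomputable def meg {V : Type*} [Fintype V] (G : SimpleGraph V) : ℕ :=
  sInf {n | ∃ S : Set V, IsMEGSet G S ∧ S.ncard = n}

/-- The strong product `G ⊠ H` of two simple graphs: `(a,b)` adjacent to `(c,d)` iff
`a = c` and `bd ∈ E(H)`, or `b = d` and `ac ∈ E(G)`, or `ac ∈ E(G)` and `bd ∈ E(H)`. -/
def strongProd {α β : Type*} (G : SimpleGraph α) (H : SimpleGraph β) :
    SimpleGraph (α × β) where
  Adj x y := (x.1 = y.1 ∧ H.Adj x.2 y.2) ∨ (x.2 = y.2 ∧ G.Adj x.1 y.1) ∨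
    (G.Adj x.1 y.1 ∧ H.Adj x.2 y.2)
  symm := ⟨fun x y => by
    rintro (⟨h1, h2⟩ | ⟨h1, h2⟩ | ⟨h1, h2⟩)
    · exact Or.inl ⟨h1.symm, h2.symm⟩
    · exact Or.inr (Or.inl ⟨h1.symm, h2.symm⟩)
    · exact Or.inr (Or.inr ⟨h1.symm, h2.symm⟩)⟩
  loopless := ⟨fun x => by
    rintro (⟨_, h⟩ | ⟨_, h⟩ | ⟨h, _⟩)
    · exact H.loopless.irrefl _ h
    · exact G.loopless.irrefl _ h
    · exact G.loopless.irrefl _ h⟩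

infixl:70 " ⊠ " => strongProd

/-- A vertex cover: a set of vertices containing at least one endpoint of every edge. -/
def IsVertexCover {V : Type*} (G : SimpleGraph V) (C : Set V) : Prop :=
  ∀ e ∈ G.edgeSet, ∃ v ∈ C, v ∈ e

/-!
The vertices of an independent set `I` of `C₅ ⊠ C₅` lying over an edge `{a, a + 1}` of `C₅`
project injectively onto an independent set of `C₅`, so at most `α(C₅) = 2` of them lie in `I`.
Each vertex lies over exactly two of the five edges, so `2 |I| ≤ 5 · 2` and `|I| ≤ 5`. The complement of a vertex cover is independent, hence every
vertex cover has at least `25 - 5 = 20` vertices.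
-/

open SimpleGraph Finset

theorem IsVertexCover.isIndepSet_compl {V : Type*} {G : SimpleGraph V} {C : Set V}
    (hC : _root_.IsVertexCover G C) : G.IsIndepSet Cᶜ := by
  intro u hu v hv _ huv
  obtain ⟨w, hwC, hw⟩ := hC s(u, v) huv
  rcases Sym2.mem_iff.1 hw with rfl | rfl
  exacts [hu hwC, hv hwC]

namespace strongProd

variable {α β : Type*} {G : SimpleGraph α} {H : SimpleGraph β}

theorem adj_iff {x y : α × β} :
    (G ⊠ H).Adj x y ↔
      x ≠ y ∧ (x.1 = y.1 ∨ G.Adj x.1 y.1) ∧ (x.2 = y.2 ∨ H.Adj x.2 y.2) := by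
  obtain ⟨a, b⟩ := x
  obtain ⟨c, d⟩ := y
  change (_ ∨ _ ∨ _) ↔ _
  constructor
  · rintro (⟨rfl, h⟩ | ⟨rfl, h⟩ | ⟨h, h'⟩)
    · exact ⟨fun he => h.ne (Prod.ext_iff.1 he).2, .inl rfl, .inr h⟩
    · exact ⟨fun he => h.ne (Prod.ext_iff.1 he).1, .inr h, .inl rfl⟩
    · exact ⟨fun he => h.ne (Prod.ext_iff.1 he).1, .inr h, .inr h'⟩
  · rintro ⟨hne, rfl | h, rfl | h'⟩
    · exact absurd rfl hne
    · exact .inl ⟨rfl, h'⟩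
    · exact .inr (.inl ⟨rfl, h⟩)
    · exact .inr (.inr ⟨h, h'⟩)

variable [DecidableEq α] [DecidableEq β]

/-- Over a clique of `G`, an independent set of `G ⊠ H` is a copy of an independent set of `H`. -/
theorem card_filter_fst_mem_le_indepNum [Finite β] {I : Finset (α × β)}
    (hI : (G ⊠ H).IsIndepSet I) {K : Finset α} (hK : G.IsClique (K : Set α)) :
    #{v ∈ I | v.1 ∈ K} ≤ H.indepNum := by
  have fst_eq_or_adj : ∀ {u v : α × β}, u.1 ∈ K → v.1 ∈ K → u.1 = v.1 ∨ G.Adj u.1 v.1 :=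
    fun hu hv => or_iff_not_imp_left.2 (hK hu hv)
  have snd_injOn :
      Set.InjOn Prod.snd (({v ∈ I | v.1 ∈ K} : Finset (α × β)) : Set (α × β)) := by
    intro u hu v hv h2
    simp only [coe_filter, Set.mem_ofPred_eq] at hu hv
    by_contra hne
    exact hI hu.1 hv.1 hne (adj_iff.2 ⟨hne, fst_eq_or_adj hu.2 hv.2, .inl h2⟩)
  have image_indep : H.IsIndepSet (({v ∈ I | v.1 ∈ K}.image Prod.snd : Finset β) : Set β) := by
    simp only [coe_image, coe_filter]
    rintro _ ⟨u, hu, rfl⟩ _ ⟨v, hv, rfl⟩ hne hadj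
    exact hI hu.1 hv.1 (fun h => hne (congrArg Prod.snd h))
      (adj_iff.2 ⟨fun h => hne (congrArg Prod.snd h), fst_eq_or_adj hu.2 hv.2, .inr hadj⟩)
  rw [← card_image_of_injOn snd_injOn]
  exact image_indep.card_le_indepNum

theorem mul_card_le_of_cliques {ι : Type*} [Fintype ι] [Finite β] {I : Finset (α × β)}
    (hI : (G ⊠ H).IsIndepSet I) (K : ι → Finset α) (hK : ∀ i, G.IsClique (K i : Set α))
    {r : ℕ} (hr : ∀ a, r ≤ #{i | a ∈ K i}) :
    #I * r ≤ Fintype.card ι * H.indepNum := by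
  simpa using card_nsmul_le_card_nsmul (s := I) (t := univ) (fun v i => v.1 ∈ K i)
    (fun v _ => hr v.1) (fun i _ => card_filter_fst_mem_le_indepNum hI (hK i))

end strongProd

theorem indepNum_cycleGraph_five_le : (cycleGraph 5).indepNum ≤ 2 := by
  have indep_card_le : ∀ s : Finset (Fin 5),
      (∀ x ∈ s, ∀ y ∈ s, x ≠ y → ¬(cycleGraph 5).Adj x y) → #s ≤ 2 := by
    decide
  obtain ⟨s, hs⟩ := (cycleGraph 5).exists_isNIndepSet_indepNum
  rw [← hs.card_eq]
  exact indep_card_le s fun x hx y hy => hs.isIndepSet hx hy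

theorem cycleGraph_five_isClique_pair (a : Fin 5) :
    (cycleGraph 5).IsClique (({a, a + 1} : Finset (Fin 5)) : Set (Fin 5)) := by
  rw [coe_pair, isClique_pair]
  revert a
  decide

theorem card_filter_mem_pair_succ (a : Fin 5) : #{i | a ∈ ({i, i + 1} : Finset (Fin 5))} = 2 := by
  revert a
  decide

theorem vertexCover_C5_strong_C5 :
    ∀ C : Set (Fin 5 × Fin 5),
      _root_.IsVertexCover (cycleGraph 5 ⊠ cycleGraph 5) C → 20 ≤ C.ncard := by
  intro C hC
  classical
  have hI : (cycleGraph 5 ⊠ cycleGraph 5).IsIndepSet (Cᶜ.toFinset : Set (Fin 5 × Fin 5)) := by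
    simpa using hC.isIndepSet_compl
  have hbound := strongProd.mul_card_le_of_cliques hI _ cycleGraph_five_isClique_pair
    (fun a => (card_filter_mem_pair_succ a).ge)
  have hcompl : Cᶜ.ncard ≤ 5 := by
    rw [Set.ncard_eq_toFinset_card']
    have := indepNum_cycleGraph_five_le
    simp only [Fintype.card_fin] at hbound
    omega
  have hsplit := Set.ncard_add_ncard_compl C
  simp only [Nat.card_eq_fintype_card, Fintype.card_prod, Fintype.card_fin] at hsplit
  omega
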